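/- In particular, parametric GFIs commute: (I_{a+,g}^{(M₁)} (I_{a+,g}^{(M₂)} f))(x) = (I_{a+,g}^{(M₂)} (I_{a+,g}^{(M₁)} f))(x) for all x in (a, b]. -/
import Mathlib


open Set intervalIntegral

/-- Left-sided parametric general fractional integral. -/
noncomputable def pGFIl (M g f : ℝ → ℝ) (a x : ℝ) : ℝ :=
  ∫ u in a..x, M (g x - g u) * f u * deriv g u

section GFIhelpers
open MeasureTheory
lemma gfi_deriv_pos (a b : ℝ) (hab : a < b) (g : ℝ → ℝ) (hg : StrictMonoOn g (Icc a b))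
    (hgd : ∀ x ∈ Icc a b, HasDerivAt g (deriv g x) x)
    (hg' : ContinuousOn (deriv g) (Icc a b))
    (hg0 : ∀ x ∈ Icc a b, deriv g x ≠ 0) :
    ∀ u ∈ Icc a b, 0 < deriv g u := by
  have hgc : ContinuousOn g (Icc a b) := fun u hu => (hgd u hu).continuousAt.continuousWithinAt
  obtain ⟨c, hc, hc'⟩ := exists_hasDerivAt_eq_slope g (deriv g) hab hgc
    (fun y hy => hgd y (Ioo_subset_Icc_self hy))
  have hcI : c ∈ Icc a b := Ioo_subset_Icc_self hc
  have hcpos : 0 < deriv g c := by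
    rw [hc']
    exact div_pos (sub_pos.2 (hg (left_mem_Icc.2 hab.le) (right_mem_Icc.2 hab.le) hab))
      (sub_pos.2 hab)
  intro u hu
  by_contra h
  push_neg at h
  have hneg : deriv g u < 0 := lt_of_le_of_ne h (hg0 u hu)
  have hsub : uIcc u c ⊆ Icc a b := uIcc_subset_Icc hu hcI
  have := intermediate_value_uIcc (hg'.mono hsub)
  have h0 : (0:ℝ) ∈ uIcc (deriv g u) (deriv g c) := by
    rw [mem_uIcc]; left; exact ⟨hneg.le, hcpos.le⟩
  obtain ⟨w, hw, hw0⟩ := this h0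
  exact hg0 w (hsub hw) hw0

lemma gfi_image (a b : ℝ) (g : ℝ → ℝ) (hg : StrictMonoOn g (Icc a b))
    (hgc : ContinuousOn g (Icc a b)) {c d : ℝ} (hc : c ∈ Icc a b) (hd : d ∈ Icc a b) :
    g '' Ioo c d = Ioo (g c) (g d) := by
  rcases le_or_gt d c with hdc | hcd
  · have h2 : ¬ g c < g d := not_lt.2 (hg.monotoneOn hd hc hdc)
    rw [Ioo_eq_empty (not_lt.2 hdc), image_empty, Ioo_eq_empty h2]
  · have hsub : Icc c d ⊆ Icc a b := Icc_subset_Icc hc.1 hd.2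
    apply Subset.antisymm
    · rintro t ⟨u, hu, rfl⟩
      exact ⟨hg hc (hsub ⟨hu.1.le, hu.2.le⟩) hu.1, hg (hsub ⟨hu.1.le, hu.2.le⟩) hd hu.2⟩
    · exact intermediate_value_Ioo hcd.le (hgc.mono hsub)

lemma gfi_cov (a b : ℝ) (g : ℝ → ℝ) (hg : StrictMonoOn g (Icc a b))
    (hgd : ∀ x ∈ Icc a b, HasDerivAt g (deriv g x) x)
    (hgpos : ∀ u ∈ Icc a b, 0 < deriv g u)
    {c d : ℝ} (hc : c ∈ Icc a b) (hd : d ∈ Icc a b) (F : ℝ → ℝ) :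
    ∫ t in Ioo (g c) (g d), F t = ∫ u in Ioo c d, F (g u) * deriv g u := by
  have hgc : ContinuousOn g (Icc a b) := fun u hu => (hgd u hu).continuousAt.continuousWithinAt
  have hsub : Ioo c d ⊆ Icc a b := by
    rcases le_or_gt d c with h | h
    · rw [Ioo_eq_empty (not_lt.2 h)]; exact empty_subset _
    · exact (Ioo_subset_Icc_self).trans (Icc_subset_Icc hc.1 hd.2)
  rw [← gfi_image a b g hg hgc hc hd,
    MeasureTheory.integral_image_eq_integral_abs_deriv_smul measurableSet_Ioo
      (fun u hu => (hgd u (hsub hu)).hasDerivWithinAt) (hg.injOn.mono hsub) F]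
  refine setIntegral_congr_fun measurableSet_Ioo (fun u hu => ?_)
  rw [abs_of_pos (hgpos u (hsub hu)), smul_eq_mul, mul_comm]

lemma gfi_cov_int (a b : ℝ) (g : ℝ → ℝ) (hg : StrictMonoOn g (Icc a b))
    (hgd : ∀ x ∈ Icc a b, HasDerivAt g (deriv g x) x)
    {c d : ℝ} (hc : c ∈ Icc a b) (hd : d ∈ Icc a b) (F : ℝ → ℝ)
    (hF : IntegrableOn F (Ioo (g c) (g d)) volume) :
    IntegrableOn (fun u => |deriv g u| * F (g u)) (Ioo c d) volume := by
  have hgc : ContinuousOn g (Icc a b) := fun u hu => (hgd u hu).continuousAt.continuousWithinAt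
  have hsub : Ioo c d ⊆ Icc a b := by
    rcases le_or_gt d c with h | h
    · rw [Ioo_eq_empty (not_lt.2 h)]; exact empty_subset _
    · exact (Ioo_subset_Icc_self).trans (Icc_subset_Icc hc.1 hd.2)
  rw [← gfi_image a b g hg hgc hc hd] at hF
  exact (MeasureTheory.integrableOn_image_iff_integrableOn_abs_deriv_smul measurableSet_Ioo
      (fun u hu => (hgd u (hsub hu)).hasDerivWithinAt) (hg.injOn.mono hsub) F).1 hF

lemma gfi_kint (M : ℝ → ℝ) (hMi : ∀ T > 0, IntervalIntegrable M volume 0 T) (c d : ℝ) :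
    IntegrableOn (fun t => M (d - t)) (Ioo c d) volume := by
  rcases le_or_gt d c with h | h
  · rw [Ioo_eq_empty (not_lt.2 h)]; exact integrableOn_empty
  · have h1 := (hMi (d - c) (by linarith)).comp_sub_left d
    rw [intervalIntegrable_iff] at h1
    refine h1.mono_set ?_
    intro t ht
    simp only [sub_zero, sub_sub_cancel, Set.mem_uIoc]
    right; exact ⟨ht.1, ht.2.le⟩

lemma gfi_kbound (M : ℝ → ℝ) (hMi : ∀ T > 0, IntervalIntegrable M volume 0 T)
    {c d T : ℝ} (hcd : c ≤ d) (hT : d - c ≤ T) (hT0 : 0 < T) :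
    ∫ t in Ioo c d, |M (d - t)| ≤ ∫ s in Ioo 0 T, |M s| := by
  have habs : IntegrableOn (fun s => |M s|) (Ioo 0 T) volume := by
    have := (hMi T hT0).abs
    rw [intervalIntegrable_iff] at this
    exact this.mono_set (by rw [uIoc_of_le hT0.le]; exact Ioo_subset_Ioc_self)
  have h1 : ∫ t in Ioo c d, |M (d - t)| = ∫ s in Ioo 0 (d - c), |M s| := by
    rw [← integral_Ioc_eq_integral_Ioo, ← integral_of_le hcd,
      intervalIntegral.integral_comp_sub_left (fun s => |M s|) d, sub_self,
      integral_of_le (by linarith), integral_Ioc_eq_integral_Ioo]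
  rw [h1]
  exact setIntegral_mono_set habs
    (Filter.Eventually.of_forall fun s => abs_nonneg _)
    (HasSubset.Subset.eventuallyLE (Ioo_subset_Ioo le_rfl hT))

set_option maxHeartbeats 1000000 in
lemma gfi_aux (M₁ M₂ : ℝ → ℝ)
    (hM₁c : ContinuousOn M₁ (Ioi 0)) (hM₂c : ContinuousOn M₂ (Ioi 0))
    (hM₁i : ∀ T > 0, IntervalIntegrable M₁ volume 0 T)
    (hM₂i : ∀ T > 0, IntervalIntegrable M₂ volume 0 T)
    (a b : ℝ) (hab : a < b) (g : ℝ → ℝ)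
    (hg : StrictMonoOn g (Icc a b))
    (hgd : ∀ x ∈ Icc a b, HasDerivAt g (deriv g x) x)
    (hg' : ContinuousOn (deriv g) (Icc a b))
    (hg0 : ∀ x ∈ Icc a b, deriv g x ≠ 0)
    (f : ℝ → ℝ) (hf : ContinuousOn f (Icc a b))
    (x : ℝ) (hx : x ∈ Ioc a b) :
    pGFIl M₁ g (fun u => pGFIl M₂ g f a u) a x
      = ∫ v in Ioo a x, f v * deriv g v *
          ∫ t in Ioo (g v) (g x), M₁ (g x - t) * M₂ (t - g v) := by
  obtain ⟨hax, hxb⟩ := hx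
  have hxI : x ∈ Icc a b := ⟨hax.le, hxb⟩
  have haI : a ∈ Icc a b := left_mem_Icc.2 hab.le
  have hbI : b ∈ Icc a b := right_mem_Icc.2 hab.le
  have hIax : Ioo a x ⊆ Icc a b := Ioo_subset_Icc_self.trans (Icc_subset_Icc le_rfl hxb)
  have hgc : ContinuousOn g (Icc a b) := fun u hu => (hgd u hu).continuousAt.continuousWithinAt
  have hgpos := gfi_deriv_pos a b hab g hg hgd hg' hg0
  obtain ⟨K₁, hK₁⟩ := isCompact_Icc.exists_bound_of_continuousOn hf
  have hK₁0 : 0 ≤ K₁ := le_trans (norm_nonneg _) (hK₁ a haI)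
  set T : ℝ := g b - g a with hT
  have hT0 : 0 < T := sub_pos.2 (hg haI hbI hab)
  set I₂ : ℝ := ∫ s in Ioo 0 T, |M₂ s| with hI₂
  have hI₂0 : 0 ≤ I₂ := setIntegral_nonneg measurableSet_Ioo (fun s _ => abs_nonneg _)
  set S : Set (ℝ × ℝ) := {p | a < p.2 ∧ p.2 < p.1 ∧ p.1 < x} with hS
  have hSopen : IsOpen S := by
    have hrw : S = {p : ℝ × ℝ | a < p.2} ∩ ({p : ℝ × ℝ | p.2 < p.1} ∩ {p : ℝ × ℝ | p.1 < x}) := by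
      ext p; simp only [hS, mem_setOf_eq, mem_inter_iff]
    rw [hrw]
    exact (isOpen_lt continuous_const continuous_snd).inter
      ((isOpen_lt continuous_snd continuous_fst).inter
        (isOpen_lt continuous_fst continuous_const))
  have hSm : MeasurableSet S := hSopen.measurableSet
  set P : ℝ × ℝ → ℝ := fun p =>
    M₁ (g x - g p.1) * deriv g p.1 * (M₂ (g p.1 - g p.2) * f p.2 * deriv g p.2) with hP
  -- section identities
  have hsec1 : ∀ u ∈ Ioo a x, ∀ v : ℝ, ((u, v) ∈ S) ↔ v ∈ Ioo a u := by
    intro u hu v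
    simp only [hS, mem_setOf_eq, mem_Ioo]
    exact ⟨fun h => ⟨h.1, h.2.1⟩, fun h => ⟨h.1, h.2, hu.2⟩⟩
  have hsec1' : ∀ u : ℝ, u ∉ Ioo a x → ∀ v : ℝ, (u, v) ∉ S := by
    intro u hu v hv
    exact hu ⟨lt_trans hv.1 hv.2.1, hv.2.2⟩
  have hsec2 : ∀ v ∈ Ioo a x, ∀ u : ℝ, ((u, v) ∈ S) ↔ u ∈ Ioo v x := by
    intro v hv u
    simp only [hS, mem_setOf_eq, mem_Ioo]
    exact ⟨fun h => ⟨h.2.1, h.2.2⟩, fun h => ⟨hv.1, h.1, h.2⟩⟩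
  have hsec2' : ∀ v : ℝ, v ∉ Ioo a x → ∀ u : ℝ, (u, v) ∉ S := by
    intro v hv u h
    exact hv ⟨h.1, lt_trans h.2.1 h.2.2⟩
  -- continuity of P on S
  have hmem : ∀ p ∈ S, p.1 ∈ Icc a b ∧ p.2 ∈ Icc a b := fun p hp =>
    ⟨hIax ⟨lt_trans hp.1 hp.2.1, hp.2.2⟩, hIax ⟨hp.1, lt_trans hp.2.1 hp.2.2⟩⟩
  have c1 : ContinuousOn (fun p : ℝ × ℝ => g p.1) S :=
    hgc.comp continuous_fst.continuousOn (fun p hp => (hmem p hp).1)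
  have c2 : ContinuousOn (fun p : ℝ × ℝ => g p.2) S :=
    hgc.comp continuous_snd.continuousOn (fun p hp => (hmem p hp).2)
  have c3 : ContinuousOn (fun p : ℝ × ℝ => deriv g p.1) S :=
    hg'.comp continuous_fst.continuousOn (fun p hp => (hmem p hp).1)
  have c4 : ContinuousOn (fun p : ℝ × ℝ => deriv g p.2) S :=
    hg'.comp continuous_snd.continuousOn (fun p hp => (hmem p hp).2)
  have c5 : ContinuousOn (fun p : ℝ × ℝ => f p.2) S :=
    hf.comp continuous_snd.continuousOn (fun p hp => (hmem p hp).2)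
  have cM₁ : ContinuousOn (fun p : ℝ × ℝ => M₁ (g x - g p.1)) S :=
    hM₁c.comp (continuousOn_const.sub c1)
      (fun p hp => mem_Ioi.2 (sub_pos.2 (hg (hmem p hp).1 hxI hp.2.2)))
  have cM₂ : ContinuousOn (fun p : ℝ × ℝ => M₂ (g p.1 - g p.2)) S :=
    hM₂c.comp (c1.sub c2)
      (fun p hp => mem_Ioi.2 (sub_pos.2 (hg (hmem p hp).2 (hmem p hp).1 hp.2.1)))
  have hPc : ContinuousOn P S := (cM₁.mul c3).mul ((cM₂.mul c5).mul c4)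
  have hPsm : AEStronglyMeasurable (S.indicator P) (volume.prod volume) :=
    (aestronglyMeasurable_indicator_iff hSm).2 (hPc.aestronglyMeasurable hSm)
  -- inner kernel integrability
  have hker : ∀ u ∈ Ioo a x,
      IntegrableOn (fun v => |deriv g v| * |M₂ (g u - g v)|) (Ioo a u) volume := by
    intro u hu
    exact gfi_cov_int a b g hg hgd haI (hIax hu) (fun t => |M₂ (g u - t)|)
      (gfi_kint M₂ hM₂i _ _).abs
  have hInner : ∀ u ∈ Ioo a x,
      IntegrableOn (fun v => M₂ (g u - g v) * f v * deriv g v) (Ioo a u) volume := by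
    intro u hu
    have huI : u ∈ Icc a b := hIax hu
    have hIau : Ioo a u ⊆ Icc a b := Ioo_subset_Icc_self.trans (Icc_subset_Icc le_rfl huI.2)
    refine Integrable.mono' ((hker u hu).const_mul K₁) ?_ ?_
    · refine ContinuousOn.aestronglyMeasurable ?_ measurableSet_Ioo
      have hgv : ContinuousOn g (Ioo a u) := hgc.mono hIau
      exact ((hM₂c.comp (continuousOn_const.sub hgv)
        (fun v hv => mem_Ioi.2 (sub_pos.2 (hg (hIau hv) huI hv.2)))).mul
        (hf.mono hIau)).mul (hg'.mono hIau)
    · refine (ae_restrict_iff' measurableSet_Ioo).2 (Filter.Eventually.of_forall (fun v hv => ?_))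
      have hvI : v ∈ Icc a b := hIau hv
      have habs : ‖M₂ (g u - g v) * f v * deriv g v‖
          = |f v| * (|deriv g v| * |M₂ (g u - g v)|) := by
        rw [Real.norm_eq_abs, abs_mul, abs_mul]; ring
      rw [habs]
      have hfv : |f v| ≤ K₁ := hK₁ v hvI
      exact mul_le_mul_of_nonneg_right hfv (by positivity)
  -- integrability of each u-section
  have hSecInt : ∀ u : ℝ, Integrable (fun v => S.indicator P (u, v)) volume := by
    intro u
    by_cases hu : u ∈ Ioo a x
    · have heq : (fun v => S.indicator P (u, v)) = (Ioo a u).indicator (fun v => P (u, v)) := by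
        funext v
        by_cases hv : v ∈ Ioo a u
        · rw [indicator_of_mem ((hsec1 u hu v).2 hv), indicator_of_mem hv]
        · rw [indicator_of_notMem (fun hs => hv ((hsec1 u hu v).1 hs)),
            indicator_of_notMem hv]
      rw [heq, integrable_indicator_iff measurableSet_Ioo]
      simp only [hP]
      exact (hInner u hu).const_mul (M₁ (g x - g u) * deriv g u)
    · have heq : (fun v => S.indicator P (u, v)) = fun _ => (0 : ℝ) :=
        funext fun v => indicator_of_notMem (hsec1' u hu v) P
      rw [heq]
      exact integrable_zero _ _ _
  -- integrability of the iterated norm integral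
  have hM₁int : IntegrableOn (fun u => |deriv g u| * |M₁ (g x - g u)|) (Ioo a x) volume :=
    gfi_cov_int a b g hg hgd haI hxI (fun t => |M₁ (g x - t)|) (gfi_kint M₁ hM₁i _ _).abs
  have hGint : Integrable
      ((Ioo a x).indicator fun u => K₁ * I₂ * (|deriv g u| * |M₁ (g x - g u)|)) volume := by
    rw [integrable_indicator_iff measurableSet_Ioo]
    exact hM₁int.const_mul _
  have hNormBound : ∀ u : ℝ, ‖∫ v, ‖S.indicator P (u, v)‖‖
      ≤ (Ioo a x).indicator (fun u => K₁ * I₂ * (|deriv g u| * |M₁ (g x - g u)|)) u := by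
    intro u
    by_cases hu : u ∈ Ioo a x
    · have huI : u ∈ Icc a b := hIax hu
      have hIau : Ioo a u ⊆ Icc a b := Ioo_subset_Icc_self.trans (Icc_subset_Icc le_rfl huI.2)
      have heq : ∀ v : ℝ, ‖S.indicator P (u, v)‖ = (Ioo a u).indicator (fun v => ‖P (u, v)‖) v := by
        intro v
        by_cases hv : v ∈ Ioo a u
        · rw [indicator_of_mem ((hsec1 u hu v).2 hv), indicator_of_mem hv]
        · rw [indicator_of_notMem (fun hs => hv ((hsec1 u hu v).1 hs)),
            indicator_of_notMem hv, norm_zero]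
      rw [indicator_of_mem hu]
      simp only [heq]
      rw [MeasureTheory.integral_indicator measurableSet_Ioo]
      have hnn : 0 ≤ ∫ v in Ioo a u, ‖P (u, v)‖ :=
        setIntegral_nonneg measurableSet_Ioo fun v _ => norm_nonneg _
      rw [Real.norm_eq_abs, abs_of_nonneg hnn]
      have hPint : IntegrableOn (fun v => ‖P (u, v)‖) (Ioo a u) volume := by
        simp only [hP]
        exact ((hInner u hu).const_mul (M₁ (g x - g u) * deriv g u)).norm
      have step1 : ∫ v in Ioo a u, ‖P (u, v)‖
          ≤ ∫ v in Ioo a u,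
              (|M₁ (g x - g u)| * |deriv g u| * K₁) * (|deriv g v| * |M₂ (g u - g v)|) := by
        refine setIntegral_mono_on hPint ((hker u hu).const_mul _) measurableSet_Ioo ?_
        intro v hv
        have hvI : v ∈ Icc a b := hIau hv
        have h1 : ‖P (u, v)‖
            = |M₁ (g x - g u)| * |deriv g u| * (|f v| * (|deriv g v| * |M₂ (g u - g v)|)) := by
          simp only [hP, Real.norm_eq_abs, abs_mul]; ring
        rw [h1]
        have h2 : |f v| * (|deriv g v| * |M₂ (g u - g v)|)
            ≤ K₁ * (|deriv g v| * |M₂ (g u - g v)|) :=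
          mul_le_mul_of_nonneg_right (hK₁ v hvI) (by positivity)
        calc |M₁ (g x - g u)| * |deriv g u| * (|f v| * (|deriv g v| * |M₂ (g u - g v)|))
            ≤ |M₁ (g x - g u)| * |deriv g u| * (K₁ * (|deriv g v| * |M₂ (g u - g v)|)) :=
              mul_le_mul_of_nonneg_left h2 (by positivity)
          _ = (|M₁ (g x - g u)| * |deriv g u| * K₁) * (|deriv g v| * |M₂ (g u - g v)|) := by
              ring
      have step2 : ∫ v in Ioo a u,
            (|M₁ (g x - g u)| * |deriv g u| * K₁) * (|deriv g v| * |M₂ (g u - g v)|)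
          = (|M₁ (g x - g u)| * |deriv g u| * K₁)
              * ∫ v in Ioo a u, |deriv g v| * |M₂ (g u - g v)| :=
        MeasureTheory.integral_const_mul _ _
      have step3 : ∫ v in Ioo a u, |deriv g v| * |M₂ (g u - g v)|
          = ∫ t in Ioo (g a) (g u), |M₂ (g u - t)| := by
        rw [gfi_cov a b g hg hgd hgpos haI huI (fun t => |M₂ (g u - t)|)]
        exact setIntegral_congr_fun measurableSet_Ioo fun v hv => by
          rw [abs_of_pos (hgpos v (hIau hv)), mul_comm]
      have step4 : ∫ t in Ioo (g a) (g u), |M₂ (g u - t)| ≤ I₂ :=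
        gfi_kbound M₂ hM₂i (hg.monotoneOn haI huI huI.1)
          (sub_le_sub_right (hg.monotoneOn huI hbI huI.2) _) hT0
      calc (∫ v in Ioo a u, ‖P (u, v)‖)
          ≤ (|M₁ (g x - g u)| * |deriv g u| * K₁)
              * ∫ t in Ioo (g a) (g u), |M₂ (g u - t)| := by
            rw [← step3, ← step2]; exact step1
        _ ≤ (|M₁ (g x - g u)| * |deriv g u| * K₁) * I₂ :=
            mul_le_mul_of_nonneg_left step4 (by positivity)
        _ = K₁ * I₂ * (|deriv g u| * |M₁ (g x - g u)|) := by ring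
    · have heq : ∀ v : ℝ, ‖S.indicator P (u, v)‖ = 0 := fun v => by
        rw [indicator_of_notMem (hsec1' u hu v), norm_zero]
      rw [indicator_of_notMem hu]
      simp only [heq]
      simp
  have hNormInt : Integrable (fun u => ∫ v, ‖S.indicator P (u, v)‖) volume :=
    Integrable.mono' hGint hPsm.norm.integral_prod_right'
      (Filter.Eventually.of_forall hNormBound)
  have hProdInt : Integrable (S.indicator P) (volume.prod volume) :=
    (integrable_prod_iff hPsm).2 ⟨Filter.Eventually.of_forall hSecInt, hNormInt⟩
  have hFub : ∫ u, ∫ v, S.indicator P (u, v) = ∫ v, ∫ u, S.indicator P (u, v) :=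
    integral_integral_swap (f := fun u v => S.indicator P (u, v)) hProdInt
  -- vanishing off the strip
  have e1 : ∀ u : ℝ, u ∉ Ioo a x → (∫ v, S.indicator P (u, v)) = 0 := by
    intro u hu
    have heq : ∀ v : ℝ, S.indicator P (u, v) = 0 := fun v =>
      indicator_of_notMem (hsec1' u hu v) P
    simp only [heq]
    exact MeasureTheory.integral_zero _ _
  have e2 : ∀ v : ℝ, v ∉ Ioo a x → (∫ u, S.indicator P (u, v)) = 0 := by
    intro v hv
    have heq : ∀ u : ℝ, S.indicator P (u, v) = 0 := fun u =>
      indicator_of_notMem (hsec2' v hv u) P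
    simp only [heq]
    exact MeasureTheory.integral_zero _ _
  -- LHS reduction
  have hLHS : pGFIl M₁ g (fun u => pGFIl M₂ g f a u) a x = ∫ u, ∫ v, S.indicator P (u, v) := by
    have hfun : (fun u => ∫ v, S.indicator P (u, v))
        = (Ioo a x).indicator (fun u => ∫ v, S.indicator P (u, v)) := by
      funext u
      by_cases hu : u ∈ Ioo a x
      · rw [indicator_of_mem hu]
      · rw [indicator_of_notMem hu]; exact e1 u hu
    rw [show (∫ u, ∫ v, S.indicator P (u, v))
        = ∫ u in Ioo a x, ∫ v, S.indicator P (u, v) from by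
      conv_lhs => rw [hfun]
      exact MeasureTheory.integral_indicator measurableSet_Ioo]
    simp only [pGFIl]
    rw [integral_of_le hax.le, integral_Ioc_eq_integral_Ioo]
    refine setIntegral_congr_fun measurableSet_Ioo fun u hu => ?_
    have hindfun : (fun v => S.indicator P (u, v)) = (Ioo a u).indicator (fun v => P (u, v)) := by
      funext v
      by_cases hv : v ∈ Ioo a u
      · rw [indicator_of_mem ((hsec1 u hu v).2 hv), indicator_of_mem hv]
      · rw [indicator_of_notMem (fun hs => hv ((hsec1 u hu v).1 hs)), indicator_of_notMem hv]
    rw [hindfun, MeasureTheory.integral_indicator measurableSet_Ioo]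
    rw [integral_of_le hu.1.le, integral_Ioc_eq_integral_Ioo]
    rw [show M₁ (g x - g u) * (∫ v in Ioo a u, M₂ (g u - g v) * f v * deriv g v) * deriv g u
        = (M₁ (g x - g u) * deriv g u)
            * ∫ v in Ioo a u, M₂ (g u - g v) * f v * deriv g v from by ring]
    rw [← MeasureTheory.integral_const_mul]
  -- RHS reduction
  have hRHS : ∫ v, ∫ u, S.indicator P (u, v)
      = ∫ v in Ioo a x, f v * deriv g v
          * ∫ t in Ioo (g v) (g x), M₁ (g x - t) * M₂ (t - g v) := by
    have hfun : (fun v => ∫ u, S.indicator P (u, v))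
        = (Ioo a x).indicator (fun v => ∫ u, S.indicator P (u, v)) := by
      funext v
      by_cases hv : v ∈ Ioo a x
      · rw [indicator_of_mem hv]
      · rw [indicator_of_notMem hv]; exact e2 v hv
    rw [show (∫ v, ∫ u, S.indicator P (u, v))
        = ∫ v in Ioo a x, ∫ u, S.indicator P (u, v) from by
      conv_lhs => rw [hfun]
      exact MeasureTheory.integral_indicator measurableSet_Ioo]
    refine setIntegral_congr_fun measurableSet_Ioo fun v hv => ?_
    have hvI : v ∈ Icc a b := hIax hv
    have hindfun2 : (fun u => S.indicator P (u, v)) = (Ioo v x).indicator (fun u => P (u, v)) := by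
      funext u
      by_cases hu : u ∈ Ioo v x
      · rw [indicator_of_mem ((hsec2 v hv u).2 hu), indicator_of_mem hu]
      · rw [indicator_of_notMem (fun hs => hu ((hsec2 v hv u).1 hs)), indicator_of_notMem hu]
    rw [hindfun2, MeasureTheory.integral_indicator measurableSet_Ioo,
      gfi_cov a b g hg hgd hgpos hvI hxI (fun t => M₁ (g x - t) * M₂ (t - g v)),
      ← MeasureTheory.integral_const_mul]
    refine setIntegral_congr_fun measurableSet_Ioo fun u hu => ?_
    simp only [hP]
    ring
  rw [hLHS, hFub]
  exact hRHS

end GFIhelpers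

open MeasureTheory in
/-- Commutativity of left-sided parametric GFIs. -/
theorem left_parametric_GFI_commute (M₁ M₂ : ℝ → ℝ)
    (hM₁c : ContinuousOn M₁ (Ioi 0)) (hM₂c : ContinuousOn M₂ (Ioi 0))
    (hM₁i : ∀ T > 0, IntervalIntegrable M₁ MeasureTheory.volume 0 T)
    (hM₂i : ∀ T > 0, IntervalIntegrable M₂ MeasureTheory.volume 0 T)
    (a b : ℝ) (hab : a < b) (g : ℝ → ℝ)
    (hg : StrictMonoOn g (Icc a b))
    (hgd : ∀ x ∈ Icc a b, HasDerivAt g (deriv g x) x)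
    (hg' : ContinuousOn (deriv g) (Icc a b))
    (hg0 : ∀ x ∈ Icc a b, deriv g x ≠ 0)
    (f : ℝ → ℝ) (hf : ContinuousOn f (Icc a b)) :
    ∀ x ∈ Ioc a b,
      pGFIl M₁ g (fun u => pGFIl M₂ g f a u) a x =
        pGFIl M₂ g (fun u => pGFIl M₁ g f a u) a x := by
  intro x hx
  rw [gfi_aux M₁ M₂ hM₁c hM₂c hM₁i hM₂i a b hab g hg hgd hg' hg0 f hf x hx,
      gfi_aux M₂ M₁ hM₂c hM₁c hM₂i hM₁i a b hab g hg hgd hg' hg0 f hf x hx]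
  refine setIntegral_congr_fun measurableSet_Ioo fun v hv => ?_
  have hvI : v ∈ Icc a b := ⟨hv.1.le, hv.2.le.trans hx.2⟩
  have hxI : x ∈ Icc a b := ⟨hx.1.le, hx.2⟩
  have hgle : g v ≤ g x := (hg hvI hxI hv.2).le
  congr 1
  rw [← MeasureTheory.integral_Ioc_eq_integral_Ioo, ← integral_of_le hgle,
      ← MeasureTheory.integral_Ioc_eq_integral_Ioo, ← integral_of_le hgle]
  calc ∫ t in (g v)..(g x), M₁ (g x - t) * M₂ (t - g v)
      = ∫ t in (g v)..(g x), (fun s => M₂ (g x - s) * M₁ (s - g v)) (g v + g x - t) := by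
        refine intervalIntegral.integral_congr fun t ht => ?_
        show M₁ (g x - t) * M₂ (t - g v)
          = M₂ (g x - (g v + g x - t)) * M₁ (g v + g x - t - g v)
        rw [show g x - (g v + g x - t) = t - g v from by ring,
            show g v + g x - t - g v = g x - t from by ring, mul_comm]
    _ = ∫ s in (g v + g x - g x)..(g v + g x - g v), M₂ (g x - s) * M₁ (s - g v) :=
        intervalIntegral.integral_comp_sub_left (fun s => M₂ (g x - s) * M₁ (s - g v)) (g v + g x)
    _ = ∫ s in (g v)..(g x), M₂ (g x - s) * M₁ (s - g v) := by
        rw [show g v + g x - g x = g v from by ring, show g v + g x - g v = g x from by ring]
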